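/- Let S(n) = Σ_{k=0}^{n} C(n,k) Σ_{i=1}^{k} (−1)^i/i. Then for all n ≥ 0, S(n+1) − 2·S(n) = −1/(n+1). -/
import Mathlib

open scoped BigOperators

private def AH (k : ℕ) : ℚ := ∑ i ∈ Finset.Icc 1 k, (-1 : ℚ) ^ i / (i : ℚ)

private lemma AH_succ (k : ℕ) : AH (k + 1) = AH k + (-1 : ℚ) ^ (k+1) / ((k : ℚ) + 1) := by
  unfold AH
  rw [Finset.sum_Icc_succ_top (Nat.succ_le_succ (Nat.zero_le k))]
  push_cast; ring

private lemma alt_sum (n : ℕ) :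
    ∑ j ∈ Finset.range (n+1), (-1:ℚ)^j * ((n+1).choose (j+1) : ℚ) = 1 := by
  have h := Int.alternating_sum_range_choose (n := n+1)
  simp only [Nat.succ_ne_zero, if_false] at h
  rw [Finset.sum_range_succ'] at h
  have h2 : (∑ j ∈ Finset.range (n+1), (-1:ℤ)^j * ((n+1).choose (j+1) : ℤ)) = 1 := by
    have : ∑ i ∈ Finset.range (n+1), (-1:ℤ)^(i+1) * ((n+1).choose (i+1) : ℤ)
        = -∑ j ∈ Finset.range (n+1), (-1:ℤ)^j * ((n+1).choose (j+1) : ℤ) := by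
      rw [← Finset.sum_neg_distrib]
      exact Finset.sum_congr rfl fun i _ => by ring
    rw [this] at h
    simp at h
    linarith
  exact_mod_cast h2

private lemma key_sum (n : ℕ) :
    ∑ j ∈ Finset.range (n+1), (n.choose j : ℚ) * ((-1:ℚ)^(j+1) / ((j:ℚ)+1)) = -1/((n:ℚ)+1) := by
  have hterm : ∀ j ∈ Finset.range (n+1),
      (n.choose j : ℚ) * ((-1:ℚ)^(j+1) / ((j:ℚ)+1))
      = (-1/((n:ℚ)+1)) * ((-1:ℚ)^j * ((n+1).choose (j+1) : ℚ)) := by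
    intro j _
    have h := Nat.add_one_mul_choose_eq n j
    have h' : ((n:ℚ)+1) * (n.choose j : ℚ) = ((n+1).choose (j+1) : ℚ) * ((j:ℚ)+1) := by
      exact_mod_cast congrArg (fun z : ℕ => (z : ℚ)) h
    have hj : ((j:ℚ)+1) ≠ 0 := by positivity
    have hn : ((n:ℚ)+1) ≠ 0 := by positivity
    have key : (n.choose j : ℚ) / ((j:ℚ)+1) = ((n+1).choose (j+1) : ℚ) / ((n:ℚ)+1) := by
      rw [div_eq_div_iff hj hn]; linear_combination h'
    calc (n.choose j : ℚ) * ((-1:ℚ)^(j+1) / ((j:ℚ)+1))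
        = (-1:ℚ)^(j+1) * ((n.choose j : ℚ) / ((j:ℚ)+1)) := by ring
      _ = (-1:ℚ)^(j+1) * (((n+1).choose (j+1) : ℚ) / ((n:ℚ)+1)) := by rw [key]
      _ = (-1/((n:ℚ)+1)) * ((-1:ℚ)^j * ((n+1).choose (j+1) : ℚ)) := by rw [pow_succ]; ring
  rw [Finset.sum_congr rfl hterm, ← Finset.mul_sum, alt_sum, mul_one]

/-- The sum `S(n) = Σ_{k=0}^{n} C(n,k) Σ_{i=1}^{k} (−1)^i/i` satisfies the
recurrence `S(n+1) − 2 S(n) = −1/(n+1)`. -/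
theorem binomial_alternating_harmonic_recurrence (n : ℕ) :
    (∑ k ∈ Finset.range (n + 2),
        ((n + 1).choose k : ℚ) * ∑ i ∈ Finset.Icc 1 k, (-1 : ℚ) ^ i / (i : ℚ)) -
      2 * ∑ k ∈ Finset.range (n + 1),
        (n.choose k : ℚ) * ∑ i ∈ Finset.Icc 1 k, (-1 : ℚ) ^ i / (i : ℚ) =
      -1 / ((n : ℚ) + 1) := by
  have hA0 : AH 0 = 0 := by simp [AH]
  show (∑ k ∈ Finset.range (n + 2), ((n + 1).choose k : ℚ) * AH k) -
      2 * ∑ k ∈ Finset.range (n + 1), (n.choose k : ℚ) * AH k = -1 / ((n : ℚ) + 1)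
  have h1 : ∑ k ∈ Finset.range (n + 2), ((n + 1).choose k : ℚ) * AH k
      = ∑ j ∈ Finset.range (n+1), ((n+1).choose (j+1) : ℚ) * AH (j+1) := by
    rw [Finset.sum_range_succ']; simp [hA0]
  have h2 : ∀ j ∈ Finset.range (n+1),
      ((n+1).choose (j+1) : ℚ) * AH (j+1)
      = (n.choose j : ℚ) * AH j + (n.choose j : ℚ) * ((-1:ℚ)^(j+1) / ((j:ℚ)+1))
        + (n.choose (j+1) : ℚ) * AH (j+1) := by
    intro j _
    have hc : ((n+1).choose (j+1) : ℚ) = (n.choose j : ℚ) + (n.choose (j+1) : ℚ) := by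
      exact_mod_cast congrArg (fun z : ℕ => (z : ℚ)) (Nat.choose_succ_succ n j)
    rw [hc, AH_succ]; ring
  have h3 : ∑ j ∈ Finset.range (n+1), (n.choose (j+1) : ℚ) * AH (j+1)
      = ∑ k ∈ Finset.range (n + 1), (n.choose k : ℚ) * AH k := by
    have := Finset.sum_range_succ' (fun k => (n.choose k : ℚ) * AH k) (n+1)
    rw [Finset.sum_range_succ (fun k => (n.choose k : ℚ) * AH k) (n+1)] at this
    simp [hA0, Nat.choose_succ_self] at this
    -- this : ∑ k in range (n+1), ... = ∑ i in range (n+1), choose (i+1) * AH (i+1)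
    linarith [this]
  rw [h1, Finset.sum_congr rfl h2]
  rw [Finset.sum_add_distrib, Finset.sum_add_distrib, h3, key_sum]
  ring
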